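/- Suppose in addition that there are real numbers s and t with t > 0 such that s_i = s and t_i = t for all i ≥ 1. Then for every positive integer n and all real numbers α, β, writing x = (α+s)/(2√t) and y = (β+s)/(2√t), one has det(αβ·m_{i+j} + (α+β)·m_{i+j+1} + m_{i+j+2})_{i,j=0}^{n−1} · (α − β) = Num(α,β) · det(m_{i+j})_{i,j=0}^{n−1}, where Num(α,β) = t^n·√t·(U_{n+1}(x)U_n(y) − U_n(x)U_{n+1}(y)) − t^n·(s − s_0)·(U_{n+1}(x)U_{n−1}(y) − U_{n−1}(x)U_{n+1}(y)) + t^{n−1}·√t·((s − s_0)² − (t − t_0))·(U_n(x)U_{n−1}(y) − U_{n−1}(x)U_n(y)) + t^{n−1}·√t·(t − t_0)·(U_{n+1}(x)U_{n−2}(y) − U_{n−2}(x)U_{n+1}(y)) − t^{n−1}·(s − s_0)·(t − t_0)·(U_n(x)U_{n−2}(y) − U_{n−2}(x)U_n(y)) + t^{n−2}·√t·(t − t_0)²·(U_{n−1}(x)U_{n−2}(y) − U_{n−2}(x)U_{n−1}(y)), with U_{−1} = 0 and, for n = 1, U_{n−2} = U_{−1} = 0. -/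
import Mathlib


/-- `motzkinGF s t n k` is the weighted Motzkin path generating function `m(n,k)`. -/
def motzkinGF (s t : ℕ → ℝ) : ℕ → ℤ → ℝ
  | 0, k => if k = 0 then 1 else 0
  | n+1, k =>
      if k < 0 then 0
      else motzkinGF s t n (k-1) + s k.toNat * motzkinGF s t n k
             + t k.toNat * motzkinGF s t n (k+1)

/-- The Chebyshev polynomial of the second kind, evaluated at a real argument
(`ℤ`-indexed; in particular `chebU (-1) x = 0`). -/
noncomputable def chebU (k : ℤ) (x : ℝ) : ℝ := (Polynomial.Chebyshev.U ℝ k).eval x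

namespace HankelAux
open Polynomial Matrix Finset Equiv

section MatrixPart

variable (s t : ℕ → ℝ)

lemma mg_neg (n : ℕ) {k : ℤ} (hk : k < 0) : motzkinGF s t n k = 0 := by
  cases n with
  | zero => simp only [motzkinGF]; rw [if_neg (by omega)]
  | succ n => simp only [motzkinGF]; rw [if_pos hk]

lemma mg_rec' (n : ℕ) (k : ℤ) (hk : 0 ≤ k) :
    motzkinGF s t (n+1) k = motzkinGF s t n (k-1) + s k.toNat * motzkinGF s t n k
      + t k.toNat * motzkinGF s t n (k+1) := by
  simp only [motzkinGF]; rw [if_neg (by omega)]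

lemma mg_rec (n k : ℕ) :
    motzkinGF s t (n+1) (k : ℤ) = motzkinGF s t n ((k:ℤ)-1) + s k * motzkinGF s t n (k:ℤ)
      + t k * motzkinGF s t n ((k:ℤ)+1) := by
  rw [mg_rec' s t n k (by positivity)]
  simp

lemma mg_zero_of_gt : ∀ (n : ℕ) (k : ℤ), (n : ℤ) < k → motzkinGF s t n k = 0 := by
  intro n
  induction n with
  | zero => intro k hk; simp only [motzkinGF]; rw [if_neg (by omega)]
  | succ n ih =>
      intro k hk
      rw [mg_rec' s t n k (by push_cast at hk ⊢; omega)]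
      rw [ih (k-1) (by push_cast at hk ⊢; omega), ih k (by push_cast at hk ⊢; omega),
        ih (k+1) (by push_cast at hk ⊢; omega)]
      ring

lemma mg_diag : ∀ n : ℕ, motzkinGF s t n (n : ℤ) = 1 := by
  intro n
  induction n with
  | zero => simp [motzkinGF]
  | succ n ih =>
      have h : ((n+1 : ℕ) : ℤ) = (n : ℤ) + 1 := by push_cast; ring
      rw [h, mg_rec' s t n ((n:ℤ)+1) (by omega)]
      rw [show (n:ℤ)+1-1 = (n:ℤ) by ring, ih,
        mg_zero_of_gt s t n ((n:ℤ)+1) (by omega),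
        mg_zero_of_gt s t n ((n:ℤ)+1+1) (by omega)]
      ring

/-- cumulative product of the `t` weights -/
def Tprod (k : ℕ) : ℝ := ∏ l ∈ Finset.range k, t l

lemma conv_step (a b N : ℕ) (ha : a < N) (hb : b + 1 < N) :
    ∑ k ∈ range N, motzkinGF s t (a+1) (k:ℤ) * Tprod t k * motzkinGF s t b (k:ℤ)
      = ∑ k ∈ range N, motzkinGF s t a (k:ℤ) * Tprod t k * motzkinGF s t (b+1) (k:ℤ) := by
  obtain ⟨N', rfl⟩ : ∃ N', N = N' + 1 := ⟨N - 1, by omega⟩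
  have e1 : ∀ k ∈ range (N'+1),
      motzkinGF s t (a+1) (k:ℤ) * Tprod t k * motzkinGF s t b (k:ℤ)
        = motzkinGF s t a ((k:ℤ)-1) * Tprod t k * motzkinGF s t b (k:ℤ)
          + s k * motzkinGF s t a (k:ℤ) * Tprod t k * motzkinGF s t b (k:ℤ)
          + t k * motzkinGF s t a ((k:ℤ)+1) * Tprod t k * motzkinGF s t b (k:ℤ) := by
    intro k _; rw [mg_rec]; ring
  have e2 : ∀ k ∈ range (N'+1),
      motzkinGF s t a (k:ℤ) * Tprod t k * motzkinGF s t (b+1) (k:ℤ)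
        = motzkinGF s t a (k:ℤ) * Tprod t k * motzkinGF s t b ((k:ℤ)-1)
          + s k * motzkinGF s t a (k:ℤ) * Tprod t k * motzkinGF s t b (k:ℤ)
          + t k * motzkinGF s t a (k:ℤ) * Tprod t k * motzkinGF s t b ((k:ℤ)+1) := by
    intro k _; rw [mg_rec]; ring
  rw [Finset.sum_congr rfl e1, Finset.sum_congr rfl e2]
  simp only [Finset.sum_add_distrib]
  have claim1 :
      ∑ k ∈ range (N'+1), motzkinGF s t a ((k:ℤ)-1) * Tprod t k * motzkinGF s t b (k:ℤ)
        = ∑ k ∈ range (N'+1),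
            t k * motzkinGF s t a (k:ℤ) * Tprod t k * motzkinGF s t b ((k:ℤ)+1) := by
    rw [Finset.sum_range_succ' (fun k =>
      motzkinGF s t a ((k:ℤ)-1) * Tprod t k * motzkinGF s t b (k:ℤ)) N']
    rw [Finset.sum_range_succ (fun k =>
      t k * motzkinGF s t a (k:ℤ) * Tprod t k * motzkinGF s t b ((k:ℤ)+1)) N']
    rw [mg_neg s t a (show ((0:ℕ):ℤ) - 1 < 0 by norm_num),
        mg_zero_of_gt s t b ((N':ℤ)+1) (by exact_mod_cast by omega)]
    simp only [zero_mul, mul_zero, add_zero]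
    apply Finset.sum_congr rfl
    intro i _
    have : (((i+1:ℕ)):ℤ) - 1 = (i:ℤ) := by push_cast; ring
    rw [this]
    have : (((i+1:ℕ)):ℤ) = (i:ℤ) + 1 := by push_cast; ring
    rw [this]
    have hT : Tprod t (i+1) = Tprod t i * t i := Finset.prod_range_succ _ _
    rw [hT]; ring
  have claim2 :
      ∑ k ∈ range (N'+1),
          t k * motzkinGF s t a ((k:ℤ)+1) * Tprod t k * motzkinGF s t b (k:ℤ)
        = ∑ k ∈ range (N'+1),
            motzkinGF s t a (k:ℤ) * Tprod t k * motzkinGF s t b ((k:ℤ)-1) := by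
    rw [Finset.sum_range_succ' (fun k =>
      motzkinGF s t a (k:ℤ) * Tprod t k * motzkinGF s t b ((k:ℤ)-1)) N']
    rw [Finset.sum_range_succ (fun k =>
      t k * motzkinGF s t a ((k:ℤ)+1) * Tprod t k * motzkinGF s t b (k:ℤ)) N']
    rw [mg_neg s t b (show ((0:ℕ):ℤ) - 1 < 0 by norm_num),
        mg_zero_of_gt s t a ((N':ℤ)+1) (by exact_mod_cast by omega)]
    simp only [zero_mul, mul_zero, add_zero]
    apply Finset.sum_congr rfl
    intro i _
    have h1 : (((i+1:ℕ)):ℤ) - 1 = (i:ℤ) := by push_cast; ring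
    have h2 : (((i+1:ℕ)):ℤ) = (i:ℤ) + 1 := by push_cast; ring
    rw [h1, h2]
    have hT : Tprod t (i+1) = Tprod t i * t i := Finset.prod_range_succ _ _
    rw [hT]; ring
  rw [claim1, claim2]
  ring

lemma conv_full : ∀ (a b N : ℕ), a + b + 2 ≤ N →
    ∑ k ∈ range N, motzkinGF s t a (k:ℤ) * Tprod t k * motzkinGF s t b (k:ℤ)
      = motzkinGF s t (a+b) 0 := by
  intro a
  induction a with
  | zero =>
      intro b N hN
      rw [Finset.sum_eq_single 0]
      · simp [motzkinGF, Tprod]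
      · intro k _ hk
        have : motzkinGF s t 0 (k:ℤ) = 0 := by
          simp only [motzkinGF]
          rw [if_neg (by exact_mod_cast hk)]
        rw [this]; ring
      · intro h; exact absurd (Finset.mem_range.2 (by omega)) h
  | succ a ih =>
      intro b N hN
      rw [conv_step s t a b N (by omega) (by omega)]
      rw [ih (b+1) N (by omega)]
      congr 1
      omega

lemma conv' (a b N : ℕ) (hb : b < N) :
    ∑ k ∈ range N, motzkinGF s t a (k:ℤ) * Tprod t k * motzkinGF s t b (k:ℤ)
      = motzkinGF s t (a+b) 0 := by
  set M := max N (a+b+2) with hM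
  have hsub : ∀ (K : ℕ), b < K → K ≤ M →
      ∑ k ∈ range M, motzkinGF s t a (k:ℤ) * Tprod t k * motzkinGF s t b (k:ℤ)
        = ∑ k ∈ range K, motzkinGF s t a (k:ℤ) * Tprod t k * motzkinGF s t b (k:ℤ) := by
    intro K hbK hKM
    rw [← Finset.sum_subset (Finset.range_subset_range.2 hKM)]
    intro k _ hk
    have hk' : K ≤ k := by
      by_contra h
      exact hk (Finset.mem_range.2 (by omega))
    rw [mg_zero_of_gt s t b (k:ℤ) (by exact_mod_cast (show b < k by omega))]
    ring
  rw [← hsub N hb (le_max_left _ _), hsub (a+b+2) (by omega) (le_max_right _ _)]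
  exact conv_full s t a b (a+b+2) le_rfl

variable (n : ℕ) (α β : ℝ)

noncomputable def Lmat : Matrix (Fin n) (Fin n) ℝ :=
  Matrix.of fun j k => motzkinGF s t j ((k:ℕ) : ℤ)

noncomputable def Dmat : Matrix (Fin n) (Fin n) ℝ :=
  Matrix.diagonal fun k => Tprod t k

noncomputable def cE (i l : ℕ) : ℝ :=
  α * β * motzkinGF s t i l + (α + β) * motzkinGF s t (i+1) l + motzkinGF s t (i+2) l

noncomputable def Cmat : Matrix (Fin n) (Fin n) ℝ :=
  Matrix.of fun i k => cE s t α β i k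

lemma Hfact :
    (Matrix.of fun i j : Fin n => motzkinGF s t ((i:ℕ) + (j:ℕ)) 0)
      = Lmat s t n * Dmat t n * (Lmat s t n)ᵀ := by
  ext i j
  rw [Matrix.mul_apply]
  simp only [Matrix.mul_diagonal, Matrix.of_apply, Matrix.transpose_apply, Lmat, Dmat]
  rw [Fin.sum_univ_eq_sum_range
    (fun k => motzkinGF s t i ((k:ℕ):ℤ) * Tprod t k * motzkinGF s t j ((k:ℕ):ℤ))]
  exact (conv' s t i j n j.isLt).symm

lemma Bfact :
    (Matrix.of fun i j : Fin n =>
        α * β * motzkinGF s t ((i:ℕ) + (j:ℕ)) 0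
          + (α + β) * motzkinGF s t ((i:ℕ) + (j:ℕ) + 1) 0
          + motzkinGF s t ((i:ℕ) + (j:ℕ) + 2) 0)
      = Cmat s t n α β * Dmat t n * (Lmat s t n)ᵀ := by
  ext i j
  rw [Matrix.mul_apply]
  simp only [Matrix.mul_diagonal, Matrix.of_apply, Matrix.transpose_apply, Cmat, Lmat, Dmat, cE]
  rw [Fin.sum_univ_eq_sum_range (fun k =>
    (α * β * motzkinGF s t i ((k:ℕ):ℤ) + (α + β) * motzkinGF s t (i+1) ((k:ℕ):ℤ)
      + motzkinGF s t (i+2) ((k:ℕ):ℤ)) * Tprod t k * motzkinGF s t j ((k:ℕ):ℤ))]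
  have expand : ∀ k ∈ range n,
      (α * β * motzkinGF s t i ((k:ℕ):ℤ) + (α + β) * motzkinGF s t (i+1) ((k:ℕ):ℤ)
        + motzkinGF s t (i+2) ((k:ℕ):ℤ)) * Tprod t k * motzkinGF s t j ((k:ℕ):ℤ)
      = α * β * (motzkinGF s t i ((k:ℕ):ℤ) * Tprod t k * motzkinGF s t j ((k:ℕ):ℤ))
        + (α + β) * (motzkinGF s t (i+1) ((k:ℕ):ℤ) * Tprod t k * motzkinGF s t j ((k:ℕ):ℤ))
        + motzkinGF s t (i+2) ((k:ℕ):ℤ) * Tprod t k * motzkinGF s t j ((k:ℕ):ℤ) := by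
    intro k _; ring
  rw [Finset.sum_congr rfl expand, Finset.sum_add_distrib, Finset.sum_add_distrib,
    ← Finset.mul_sum, ← Finset.mul_sum]
  rw [conv' s t i j n j.isLt, conv' s t (i+1) j n j.isLt, conv' s t (i+2) j n j.isLt]
  have h1 : (i:ℕ) + 1 + (j:ℕ) = (i:ℕ) + (j:ℕ) + 1 := by omega
  have h2 : (i:ℕ) + 2 + (j:ℕ) = (i:ℕ) + (j:ℕ) + 2 := by omega
  rw [h1, h2]

lemma det_Lmat : (Lmat s t n).det = 1 := by
  have h : (Lmat s t n).BlockTriangular OrderDual.toDual := by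
    intro i j hij
    exact mg_zero_of_gt s t i ((j:ℕ):ℤ) (by exact_mod_cast hij)
  rw [Matrix.det_of_lowerTriangular _ h]
  have : ∀ i : Fin n, Lmat s t n i i = 1 := fun i => mg_diag s t i
  rw [Finset.prod_congr rfl (fun i _ => this i)]
  simp

lemma det_B_eq :
    (Matrix.of fun i j : Fin n =>
        α * β * motzkinGF s t ((i:ℕ) + (j:ℕ)) 0
          + (α + β) * motzkinGF s t ((i:ℕ) + (j:ℕ) + 1) 0
          + motzkinGF s t ((i:ℕ) + (j:ℕ) + 2) 0).det
      = (Cmat s t n α β).det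
          * (Matrix.of fun i j : Fin n => motzkinGF s t ((i:ℕ) + (j:ℕ)) 0).det := by
  rw [Hfact, Bfact]
  simp only [Matrix.det_mul, Matrix.det_transpose, det_Lmat]
  ring

/-- the monic orthogonal-like polynomials dual to the Motzkin triangle -/
noncomputable def pp (s t : ℕ → ℝ) : ℕ → Polynomial ℝ
  | 0 => 1
  | 1 => X - C (s 0)
  | (k+2) => (X - C (s (k+1))) * pp s t (k+1) - C (t k) * pp s t k

lemma pp_monic_deg : ∀ k : ℕ, (pp s t k).Monic ∧ (pp s t k).natDegree = k := by
  intro k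
  induction k using Nat.strong_induction_on with
  | _ k ih =>
    match k with
    | 0 => exact ⟨monic_one, natDegree_one⟩
    | 1 => exact ⟨monic_X_sub_C _, natDegree_X_sub_C _⟩
    | (k+2) =>
      obtain ⟨h1m, h1d⟩ := ih (k+1) (by omega)
      obtain ⟨h0m, h0d⟩ := ih k (by omega)
      have hprod : ((X - C (s (k+1))) * pp s t (k+1)).Monic :=
        (monic_X_sub_C _).mul h1m
      have hproddeg : ((X - C (s (k+1))) * pp s t (k+1)).natDegree = k + 2 := by
        rw [(monic_X_sub_C _).natDegree_mul h1m, natDegree_X_sub_C, h1d]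
        omega
      have hlow : (C (t k) * pp s t k).natDegree < k + 2 := by
        calc (C (t k) * pp s t k).natDegree ≤ (pp s t k).natDegree :=
              natDegree_C_mul_le _ _
          _ < k + 2 := by omega
      have hdeg : (C (t k) * pp s t k).degree
          < ((X - C (s (k+1))) * pp s t (k+1)).degree := by
        apply lt_of_le_of_lt (degree_le_natDegree)
        rw [degree_eq_natDegree hprod.ne_zero, hproddeg]
        exact_mod_cast hlow
      constructor
      · show ((X - C (s (k+1))) * pp s t (k+1) - C (t k) * pp s t k).Monic
        exact hprod.sub_of_left hdeg
      · show ((X - C (s (k+1))) * pp s t (k+1) - C (t k) * pp s t k).natDegree = k + 2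
        rw [natDegree_sub_eq_left_of_natDegree_lt (by omega), hproddeg]

lemma pp_monic (k : ℕ) : (pp s t k).Monic := (pp_monic_deg s t k).1
lemma pp_natDegree (k : ℕ) : (pp s t k).natDegree = k := (pp_monic_deg s t k).2

lemma X_mul_pp (k : ℕ) :
    X * pp s t k = pp s t (k+1) + C (s k) * pp s t k
      + (if k = 0 then 0 else C (t (k-1)) * pp s t (k-1)) := by
  match k with
  | 0 => rw [if_pos rfl]; simp only [pp]; ring
  | (k+1) =>
    rw [if_neg (by omega)]
    show X * pp s t (k+1) = (X - C (s (k+1))) * pp s t (k+1) - C (t k) * pp s t k + _ + _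
    simp only [Nat.add_sub_cancel]
    ring

lemma X_pow_expand : ∀ (m N : ℕ), m < N →
    (X : Polynomial ℝ)^m = ∑ k ∈ range N, C (motzkinGF s t m (k:ℤ)) * pp s t k := by
  intro m
  induction m with
  | zero =>
    intro N hN
    rw [Finset.sum_eq_single 0]
    · simp [motzkinGF, pp]
    · intro k _ hk
      have : motzkinGF s t 0 (k:ℤ) = 0 := by
        simp only [motzkinGF]; rw [if_neg (by exact_mod_cast hk)]
      rw [this]; simp
    · intro h; exact absurd (Finset.mem_range.2 (by omega)) h
  | succ m ih =>
    intro N hN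
    obtain ⟨N', rfl⟩ : ∃ N', N = N' + 1 := ⟨N - 1, by omega⟩
    have key : (X : Polynomial ℝ)^(m+1) = ∑ k ∈ range (N'+1),
        C (motzkinGF s t m (k:ℤ)) * (X * pp s t k) := by
      rw [pow_succ, ih (N'+1) (by omega), Finset.sum_mul]
      apply Finset.sum_congr rfl
      intro k _; ring
    rw [key]
    have split : ∀ k ∈ range (N'+1),
        C (motzkinGF s t m (k:ℤ)) * (X * pp s t k)
          = C (motzkinGF s t m (k:ℤ)) * pp s t (k+1)
            + C (s k * motzkinGF s t m (k:ℤ)) * pp s t k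
            + C (motzkinGF s t m (k:ℤ)) *
                (if k = 0 then 0 else C (t (k-1)) * pp s t (k-1)) := by
      intro k _
      rw [X_mul_pp]
      simp only [C_mul]
      ring
    rw [Finset.sum_congr rfl split, Finset.sum_add_distrib, Finset.sum_add_distrib]
    have target : ∀ k ∈ range (N'+1),
        C (motzkinGF s t (m+1) (k:ℤ)) * pp s t k
          = C (motzkinGF s t m ((k:ℤ)-1)) * pp s t k
            + C (s k * motzkinGF s t m (k:ℤ)) * pp s t k
            + C (t k * motzkinGF s t m ((k:ℤ)+1)) * pp s t k := by
      intro k _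
      rw [mg_rec]
      simp only [C_add, C_mul]
      ring
    rw [Finset.sum_congr rfl target, Finset.sum_add_distrib, Finset.sum_add_distrib]
    congr 1
    · congr 1
      -- ∑ C (mg m k) * pp (k+1) = ∑ C (mg m (k-1)) * pp k
      rw [Finset.sum_range_succ (fun k => C (motzkinGF s t m (k:ℤ)) * pp s t (k+1)) N']
      rw [Finset.sum_range_succ' (fun k => C (motzkinGF s t m ((k:ℤ)-1)) * pp s t k) N']
      rw [mg_zero_of_gt s t m (N':ℤ) (by exact_mod_cast by omega),
          mg_neg s t m (show ((0:ℕ):ℤ)-1 < 0 by norm_num)]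
      simp only [map_zero, zero_mul, add_zero]
      apply Finset.sum_congr rfl
      intro i _
      have : (((i+1:ℕ)):ℤ) - 1 = (i:ℤ) := by push_cast; ring
      rw [this]
    · -- ∑ C (mg m k) * ite = ∑ C (t k * mg m (k+1)) * pp k
      rw [Finset.sum_range_succ' (fun k => C (motzkinGF s t m (k:ℤ)) *
        (if k = 0 then 0 else C (t (k-1)) * pp s t (k-1))) N']
      rw [Finset.sum_range_succ (fun k => C (t k * motzkinGF s t m ((k:ℤ)+1)) * pp s t k) N']
      rw [if_pos rfl]
      rw [mg_zero_of_gt s t m ((N':ℤ)+1) (by exact_mod_cast by omega)]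
      simp only [mul_zero, map_zero, zero_mul, add_zero, mul_zero]
      apply Finset.sum_congr rfl
      intro i _
      rw [if_neg (by omega)]
      simp only [Nat.add_sub_cancel]
      have : (((i+1:ℕ)):ℤ) = (i:ℤ) + 1 := by push_cast; ring
      rw [this, C_mul]
      ring

/-- index equivalences -/
def κE : (Fin 2 ⊕ Fin n) ≃ Fin (n+2) := (Equiv.sumComm (Fin 2) (Fin n)).trans finSumFinEquiv
def μE : (Fin 2 ⊕ Fin n) ≃ Fin (n+2) := finSumFinEquiv.trans (finCongr (by omega))

lemma κE_inl (a : Fin 2) : ((κE n (Sum.inl a)) : ℕ) = n + a := by simp [κE]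
lemma κE_inr (k : Fin n) : ((κE n (Sum.inr k)) : ℕ) = k := by simp [κE]
lemma μE_inl (a : Fin 2) : ((μE n (Sum.inl a)) : ℕ) = a := by simp [μE]
lemma μE_inr (j : Fin n) : ((μE n (Sum.inr j)) : ℕ) = 2 + j := by simp [μE]; omega

def xval : Fin 2 → ℝ := ![-α, -β]

noncomputable def gpoly : Fin 2 ⊕ Fin n → Polynomial ℝ
  | Sum.inl a => pp s t (n + a)
  | Sum.inr i => (X + C α) * (X + C β) * X^(i:ℕ)

noncomputable def Mmat : Matrix (Fin 2 ⊕ Fin n) (Fin 2 ⊕ Fin n) ℝ :=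
  Matrix.of fun p q => match p with
    | Sum.inl a => if q = Sum.inl a then 1 else 0
    | Sum.inr i => cE s t α β i ((κE n q : ℕ))

noncomputable def Amat : Matrix (Fin 2 ⊕ Fin n) (Fin 2 ⊕ Fin n) ℝ :=
  Matrix.of fun q r => (pp s t ((κE n q : ℕ))).coeff ((μE n r : ℕ))

noncomputable def Ahat : Matrix (Fin (n+2)) (Fin (n+2)) ℝ :=
  Matrix.of fun l l' => (pp s t (l : ℕ)).coeff (l' : ℕ)

noncomputable def Kmat : Matrix (Fin 2 ⊕ Fin n) (Fin 2 ⊕ Fin n) ℝ :=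
  Matrix.of fun p c => match c with
    | Sum.inl b => (xval α β b) ^ ((μE n p : ℕ))
    | Sum.inr j => if p = Sum.inr j then 1 else 0

noncomputable def Gmat : Matrix (Fin 2 ⊕ Fin n) (Fin 2 ⊕ Fin n) ℝ :=
  Matrix.of fun p r => (gpoly s t n α β p).coeff ((μE n r : ℕ))

/- degree facts for the `q` polynomials -/
lemma q_monic (i : ℕ) : ((X + C α) * (X + C β) * X^i).Monic :=
  ((monic_X_add_C α).mul (monic_X_add_C β)).mul (monic_X_pow i)

lemma q_natDegree (i : ℕ) : ((X + C α) * (X + C β) * X^i).natDegree = i + 2 := by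
  rw [((monic_X_add_C α).mul (monic_X_add_C β)).natDegree_mul (monic_X_pow i),
    (monic_X_add_C α).natDegree_mul (monic_X_add_C β), natDegree_X_add_C, natDegree_X_add_C,
    natDegree_X_pow]
  omega

lemma gpoly_natDegree_lt (p : Fin 2 ⊕ Fin n) : (gpoly s t n α β p).natDegree < n + 2 := by
  cases p with
  | inl a => rw [gpoly, pp_natDegree]; omega
  | inr i => rw [gpoly, q_natDegree]; omega

/-- expansion of each row polynomial in the `pp` basis -/
lemma expand_g (p : Fin 2 ⊕ Fin n) :
    gpoly s t n α β p = ∑ q : Fin 2 ⊕ Fin n, C (Mmat s t n α β p q) * pp s t ((κE n q : ℕ)) := by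
  cases p with
  | inl a =>
    rw [Finset.sum_eq_single (Sum.inl a)]
    · simp [Mmat, gpoly, κE_inl]
    · intro q _ hq
      simp only [Mmat, Matrix.of_apply, if_neg hq, map_zero, zero_mul]
    · intro h; exact absurd (Finset.mem_univ _) h
  | inr i =>
    have step1 : ∑ q : Fin 2 ⊕ Fin n, C (Mmat s t n α β (Sum.inr i) q) * pp s t ((κE n q : ℕ))
        = ∑ l : Fin (n+2), C (cE s t α β i (l : ℕ)) * pp s t (l : ℕ) := by
      rw [← Equiv.sum_comp (κE n) (fun l => C (cE s t α β i (l : ℕ)) * pp s t (l : ℕ))]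
      simp only [Mmat, Matrix.of_apply]
    rw [step1, Fin.sum_univ_eq_sum_range (fun l => C (cE s t α β i l) * pp s t l)]
    have expand : ∀ l ∈ range (n+2),
        C (cE s t α β i l) * pp s t l
          = C (α*β) * (C (motzkinGF s t i (l:ℤ)) * pp s t l)
            + C (α+β) * (C (motzkinGF s t (i+1) (l:ℤ)) * pp s t l)
            + C (motzkinGF s t (i+2) (l:ℤ)) * pp s t l := by
      intro l _
      simp only [cE, C_add, C_mul]
      ring
    rw [Finset.sum_congr rfl expand, Finset.sum_add_distrib, Finset.sum_add_distrib,
      ← Finset.mul_sum, ← Finset.mul_sum,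
      ← X_pow_expand s t i (n+2) (by omega),
      ← X_pow_expand s t (i+1) (n+2) (by omega),
      ← X_pow_expand s t (i+2) (n+2) (by omega)]
    show gpoly s t n α β (Sum.inr i) = _
    rw [gpoly]
    simp only [C_add, C_mul]
    ring

lemma MA_eq_G : Mmat s t n α β * Amat s t n = Gmat s t n α β := by
  ext p r
  rw [Matrix.mul_apply]
  simp only [Amat, Gmat, Matrix.of_apply]
  rw [expand_g s t n α β p, finset_sum_coeff]
  apply Finset.sum_congr rfl
  intro q _
  rw [coeff_C_mul]

lemma GK_eval (p : Fin 2 ⊕ Fin n) (b : Fin 2) :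
    (Gmat s t n α β * Kmat n α β) p (Sum.inl b) = (gpoly s t n α β p).eval (xval α β b) := by
  rw [Matrix.mul_apply]
  simp only [Gmat, Kmat, Matrix.of_apply]
  rw [eval_eq_sum_range' (gpoly_natDegree_lt s t n α β p) (xval α β b),
    ← Fin.sum_univ_eq_sum_range (fun l => (gpoly s t n α β p).coeff l * (xval α β b)^l),
    ← Equiv.sum_comp (μE n)
      (fun l : Fin (n+2) => (gpoly s t n α β p).coeff (l:ℕ) * (xval α β b)^(l:ℕ))]

lemma GK_coeff (p : Fin 2 ⊕ Fin n) (j : Fin n) :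
    (Gmat s t n α β * Kmat n α β) p (Sum.inr j) = (gpoly s t n α β p).coeff (2 + j) := by
  rw [Matrix.mul_apply]
  simp only [Gmat, Kmat, Matrix.of_apply]
  rw [Finset.sum_eq_single (Sum.inr j)]
  · rw [if_pos rfl, mul_one, μE_inr]
  · intro q _ hq; rw [if_neg hq, mul_zero]
  · intro h; exact absurd (Finset.mem_univ _) h

lemma Mmat_blocks : Mmat s t n α β = Matrix.fromBlocks 1 0
    (Matrix.of fun (i : Fin n) (b : Fin 2) => cE s t α β i (n + b)) (Cmat s t n α β) := by
  ext p q
  cases p with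
  | inl a =>
    cases q with
    | inl b =>
      by_cases h : a = b
      · subst h; simp [Mmat, Matrix.one_apply]
      · simp [Mmat, Matrix.one_apply, h, Ne.symm h]
    | inr k => simp [Mmat]
  | inr i =>
    cases q with
    | inl b => simp [Mmat, κE_inl]
    | inr k => simp [Mmat, Cmat, κE_inr]

lemma det_Mmat : (Mmat s t n α β).det = (Cmat s t n α β).det := by
  rw [Mmat_blocks, Matrix.det_fromBlocks_zero₁₂]
  simp

lemma det_Ahat : (Ahat s t n).det = 1 := by
  have h : (Ahat s t n).BlockTriangular OrderDual.toDual := by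
    intro i j hij
    have : (i : ℕ) < (j : ℕ) := hij
    exact coeff_eq_zero_of_natDegree_lt (by rw [pp_natDegree]; exact this)
  rw [Matrix.det_of_lowerTriangular _ h]
  have hdiag : ∀ l : Fin (n+2), Ahat s t n l l = 1 := by
    intro l
    show (pp s t (l:ℕ)).coeff (l:ℕ) = 1
    have h := (pp_monic s t (l:ℕ)).coeff_natDegree
    rwa [pp_natDegree] at h
  rw [Finset.prod_congr rfl (fun l _ => hdiag l)]
  simp

lemma rot_lemma : ∀ p : Fin 2 ⊕ Fin n,
    finRotate (n+2) (finRotate (n+2) (κE n p)) = μE n p := by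
  intro p
  apply Fin.ext
  rw [finRotate_succ_apply, finRotate_succ_apply]
  rw [Fin.val_add, Fin.val_add, Fin.val_one]
  cases p with
  | inl a =>
    have hκ : ((κE n (Sum.inl a)) : ℕ) = n + (a : ℕ) := κE_inl n a
    have hμ : ((μE n (Sum.inl a)) : ℕ) = (a : ℕ) := μE_inl n a
    have ha : (a : ℕ) = 0 ∨ (a : ℕ) = 1 := by omega
    rw [hκ, hμ]
    rcases ha with ha | ha
    · rw [ha]
      have h1 : (n + 0 + 1) % (n+2) = n + 1 := Nat.mod_eq_of_lt (by omega)
      rw [h1, show n + 1 + 1 = n + 2 by omega, Nat.mod_self]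
    · rw [ha, show n + 1 + 1 = n + 2 by omega, Nat.mod_self, Nat.zero_add,
        Nat.mod_eq_of_lt (by omega)]
  | inr k =>
    have hκ : ((κE n (Sum.inr k)) : ℕ) = (k : ℕ) := κE_inr n k
    have hμ : ((μE n (Sum.inr k)) : ℕ) = 2 + (k : ℕ) := μE_inr n k
    have hk : (k : ℕ) < n := k.isLt
    rw [hκ, hμ]
    have h1 : ((k:ℕ) + 1) % (n+2) = (k:ℕ) + 1 := Nat.mod_eq_of_lt (by omega)
    rw [h1]
    have h2 : ((k:ℕ) + 1 + 1) % (n+2) = (k:ℕ) + 1 + 1 := Nat.mod_eq_of_lt (by omega)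
    rw [h2]
    omega

lemma det_Amat : (Amat s t n).det = 1 := by
  set π : Equiv.Perm (Fin 2 ⊕ Fin n) := (κE n).trans (μE n).symm with hπ
  have hA : Amat s t n
      = ((Ahat s t n).submatrix (μE n) (μE n)).submatrix π id := by
    ext q r
    simp only [Amat, Ahat, Matrix.submatrix_apply, Matrix.of_apply, id_eq, hπ,
      Equiv.trans_apply, Equiv.apply_symm_apply]
  -- the sign of π is 1
  have hφdef : ((μE n).symm.trans π).trans (μE n) = (μE n).symm.trans (κE n) := by
    apply Equiv.ext
    intro l
    simp only [Equiv.trans_apply, hπ, Equiv.apply_symm_apply]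
  have hsign : Equiv.Perm.sign π = 1 := by
    have h1 : Equiv.Perm.sign (((μE n).symm.trans π).trans (μE n)) = Equiv.Perm.sign π :=
      Equiv.Perm.sign_symm_trans_trans π (μE n)
    rw [hφdef] at h1
    set ρ := finRotate (n+2) with hρ
    have hinv : ρ * ρ * ((μE n).symm.trans (κE n)) = 1 := by
      apply Equiv.ext
      intro l
      have := rot_lemma n ((μE n).symm l)
      simp only [Equiv.Perm.coe_mul, Function.comp_apply, Equiv.trans_apply,
        Equiv.Perm.coe_one, id_eq]
      rw [this, Equiv.apply_symm_apply]
    have hval : ((μE n).symm.trans (κE n)) = (ρ * ρ)⁻¹ :=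
      (inv_eq_of_mul_eq_one_right hinv).symm
    rw [← h1, hval, Equiv.Perm.sign_inv, _root_.map_mul, Int.units_mul_self]
  rw [hA, Matrix.det_permute, Matrix.det_submatrix_equiv_self, det_Ahat, hsign]
  simp

lemma Kmat_blocks : Kmat n α β = Matrix.fromBlocks
    (Matrix.of fun a b : Fin 2 => (xval α β b)^(a:ℕ)) 0
    (Matrix.of fun (k : Fin n) (b : Fin 2) => (xval α β b)^(2+(k:ℕ))) 1 := by
  ext p c
  cases p with
  | inl a =>
    cases c with
    | inl b => simp [Kmat, μE_inl]
    | inr j => simp [Kmat]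
  | inr k =>
    cases c with
    | inl b => simp [Kmat, μE_inr]
    | inr j =>
      by_cases h : k = j
      · subst h; simp [Kmat, Matrix.one_apply]
      · simp [Kmat, Matrix.one_apply, h, Ne.symm h]

lemma det_Kmat : (Kmat n α β).det = α - β := by
  rw [Kmat_blocks, Matrix.det_fromBlocks_zero₁₂, Matrix.det_one, mul_one,
    Matrix.det_fin_two]
  simp [xval]
  ring

noncomputable def PQmat : Matrix (Fin 2) (Fin 2) ℝ :=
  Matrix.of fun a b => (pp s t (n + (a:ℕ))).eval (xval α β b)

noncomputable def B2 : Matrix (Fin n) (Fin n) ℝ :=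
  Matrix.of fun i j => ((X + C α) * (X + C β) * X^(i:ℕ)).coeff (2+(j:ℕ))

lemma GK_blocks : Gmat s t n α β * Kmat n α β = Matrix.fromBlocks
    (PQmat s t n α β)
    (Matrix.of fun (a : Fin 2) (j : Fin n) => (pp s t (n + (a:ℕ))).coeff (2+(j:ℕ)))
    0 (B2 n α β) := by
  ext p c
  cases p with
  | inl a =>
    cases c with
    | inl b => rw [GK_eval]; simp [gpoly, PQmat]
    | inr j => rw [GK_coeff]; simp [gpoly]
  | inr i =>
    cases c with
    | inl b =>
      rw [GK_eval]
      simp only [gpoly, Matrix.fromBlocks_apply₂₁, Matrix.zero_apply]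
      fin_cases b <;> simp [xval]
    | inr j => rw [GK_coeff]; simp [gpoly, B2]

lemma det_B2 : (B2 n α β).det = 1 := by
  have h : (B2 n α β).BlockTriangular OrderDual.toDual := by
    intro i j hij
    have hlt : (i : ℕ) < (j : ℕ) := hij
    simp only [B2, Matrix.of_apply]
    exact coeff_eq_zero_of_natDegree_lt (by rw [q_natDegree]; omega)
  rw [Matrix.det_of_lowerTriangular _ h]
  have hdiag : ∀ i : Fin n, B2 n α β i i = 1 := by
    intro i
    simp only [B2, Matrix.of_apply]
    have h := (q_monic α β (i:ℕ)).coeff_natDegree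
    rwa [q_natDegree, show (i:ℕ) + 2 = 2 + (i:ℕ) by omega] at h
  rw [Finset.prod_congr rfl (fun i _ => hdiag i)]
  simp

lemma det_PQmat : (PQmat s t n α β).det
    = (pp s t n).eval (-α) * (pp s t (n+1)).eval (-β)
      - (pp s t (n+1)).eval (-α) * (pp s t n).eval (-β) := by
  rw [Matrix.det_fin_two]
  simp [PQmat, xval]
  ring

lemma key : (Cmat s t n α β).det * (α - β)
    = (pp s t n).eval (-α) * (pp s t (n+1)).eval (-β)
      - (pp s t (n+1)).eval (-α) * (pp s t n).eval (-β) := by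
  have h1 : (Mmat s t n α β * Amat s t n * Kmat n α β).det
      = (Cmat s t n α β).det * (α - β) := by
    rw [Matrix.det_mul, Matrix.det_mul, det_Mmat, det_Amat, det_Kmat]
    ring
  rw [← h1, MA_eq_G, GK_blocks, Matrix.det_fromBlocks_zero₂₁, det_B2, mul_one, det_PQmat]

end MatrixPart

section ChebPart

lemma chebU_rec (j : ℤ) (z : ℝ) : chebU (j+2) z = 2*z*chebU (j+1) z - chebU j z := by
  unfold chebU
  rw [Polynomial.Chebyshev.U_add_two]
  simp

lemma chebU_zero (z : ℝ) : chebU 0 z = 1 := by unfold chebU; simp [Polynomial.Chebyshev.U_zero]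
lemma chebU_one (z : ℝ) : chebU 1 z = 2*z := by
  unfold chebU; rw [Polynomial.Chebyshev.U_one]; simp
lemma chebU_neg_one (z : ℝ) : chebU (-1) z = 0 := by
  unfold chebU; rw [Polynomial.Chebyshev.U_neg_one]; simp

/-- rescaled Chebyshev value -/
noncomputable def utlf (u x : ℝ) (j : ℤ) : ℝ := (-u)^j * chebU j x

variable {sc tc u α β x y : ℝ} {s t : ℕ → ℝ}

lemma utlf_rec (hu : u ≠ 0) (hu2 : u^2 = tc) (hx : 2*u*x = α + sc) (j : ℤ) :
    utlf u x (j+2) = -(α+sc) * utlf u x (j+1) - tc * utlf u x j := by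
  have hne : (-u) ≠ 0 := neg_ne_zero.mpr hu
  unfold utlf
  rw [chebU_rec]
  rw [show j+2 = (j+1) + 1 by ring, zpow_add_one₀ hne, zpow_add_one₀ hne]
  have : -u * (2 * x) = -(α+sc) := by rw [← hx]; ring
  calc (-u)^j * -u * -u * (2*x*chebU (j+1) x - chebU j x)
      = (-u * (2*x)) * ((-u)^j * -u * chebU (j+1) x) - (-u * -u) * ((-u)^j * chebU j x) := by
        ring
    _ = -(α+sc) * ((-u)^j * -u * chebU (j+1) x) - tc * ((-u)^j * chebU j x) := by
        rw [this, show (-u * -u) = u^2 by ring, hu2]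

lemma utlf_zero : utlf u x 0 = 1 := by unfold utlf; rw [zpow_zero, chebU_zero]; ring
lemma utlf_one (hx : 2*u*x = α + sc) : utlf u x 1 = -(α + sc) := by
  unfold utlf; rw [zpow_one, chebU_one, ← hx]; ring
lemma utlf_neg_one : utlf u x (-1) = 0 := by unfold utlf; rw [chebU_neg_one]; ring

lemma pp_eval (hs : ∀ i, 1 ≤ i → s i = sc) (htt : ∀ i, 1 ≤ i → t i = tc)
    (hu : u ≠ 0) (hu2 : u^2 = tc) (hx : 2*u*x = α + sc) :
    ∀ k : ℕ, (pp s t (k+1)).eval (-α)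
      = utlf u x ((k:ℤ)+1) + (sc - s 0) * utlf u x (k:ℤ) + (tc - t 0) * utlf u x ((k:ℤ)-1) := by
  intro k
  induction k using Nat.strong_induction_on with
  | _ k ih =>
    match k with
    | 0 =>
      show (X - C (s 0)).eval (-α) = _
      rw [eval_sub, eval_X, eval_C]
      have g1 : ((0:ℕ):ℤ) + 1 = 1 := by norm_num
      have g2 : ((0:ℕ):ℤ) - 1 = -1 := by norm_num
      have g3 : ((0:ℕ):ℤ) = 0 := by norm_num
      rw [g1, g2, g3, utlf_one hx, utlf_zero, utlf_neg_one]
      ring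
    | 1 =>
      show ((X - C (s 1)) * pp s t 1 - C (t 0) * pp s t 0).eval (-α) = _
      rw [eval_sub, eval_mul, eval_mul, eval_sub, eval_X, eval_C, eval_C, hs 1 le_rfl]
      show (-α - sc) * (X - C (s 0)).eval (-α) - t 0 * (1:Polynomial ℝ).eval (-α) = _
      rw [eval_sub, eval_X, eval_C, eval_one]
      have h2 : utlf u x 2 = -(α+sc) * utlf u x 1 - tc * utlf u x 0 := by
        have h := utlf_rec hu hu2 hx 0
        rw [show (0:ℤ)+2 = 2 by norm_num, show (0:ℤ)+1 = 1 by norm_num] at h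
        exact h
      push_cast
      rw [h2, utlf_one hx, utlf_zero]
      ring
    | (k+2) =>
      have ih1 := ih (k+1) (by omega)
      have ih0 := ih k (by omega)
      show ((X - C (s (k+2))) * pp s t (k+2) - C (t (k+1)) * pp s t (k+1)).eval (-α) = _
      rw [eval_sub, eval_mul, eval_mul, eval_sub, eval_X, eval_C, eval_C,
        hs (k+2) (by omega), htt (k+1) (by omega), ih1, ih0]
      push_cast
      set K := (k:ℤ) with hK
      have e1 : K + 1 + 1 = K + 2 := by ring
      have e2 : K + 1 - 1 = K := by ring
      have e3 : K + 2 + 1 = K + 3 := by ring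
      have e4 : K + 2 - 1 = K + 1 := by ring
      rw [e1, e2, e3, e4]
      have h1 : utlf u x (K+3) = -(α+sc) * utlf u x (K+2) - tc * utlf u x (K+1) := by
        have := utlf_rec hu hu2 hx (K+1)
        rw [show K+1+2 = K+3 by ring, show K+1+1 = K+2 by ring] at this
        exact this
      have h2 : utlf u x (K+2) = -(α+sc) * utlf u x (K+1) - tc * utlf u x K :=
        utlf_rec hu hu2 hx K
      have h3 : utlf u x (K+1) = -(α+sc) * utlf u x K - tc * utlf u x (K-1) := by
        have := utlf_rec hu hu2 hx (K-1)
        rw [show K-1+2 = K+1 by ring, show K-1+1 = K by ring] at this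
        exact this
      linear_combination -h1 - (sc - s 0) * h2 - (tc - t 0) * h3

lemma cheb_comb (hu : u ≠ 0) (a b : ℤ) :
    chebU a x * chebU b y - chebU b x * chebU a y
      = (-u)^(-(a+b)) * (utlf u x a * utlf u y b - utlf u x b * utlf u y a) := by
  have hne : (-u) ≠ 0 := neg_ne_zero.mpr hu
  have hch : ∀ (j : ℤ) (z : ℝ), chebU j z = (-u)^(-j) * utlf u z j := by
    intro j z
    unfold utlf
    rw [← mul_assoc, ← zpow_add₀ hne]
    norm_num
  rw [hch a x, hch b y, hch b x, hch a y,
    show (-(a+b)) = (-a) + (-b) by ring, zpow_add₀ hne]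
  ring

lemma negu_pow_even (hu : u ≠ 0) (hu2 : u^2 = tc) (e : ℤ) : (-u)^(2*e) = tc^e := by
  rw [_root_.zpow_mul, show (-u)^(2:ℤ) = u^2 by rw [show (2:ℤ) = ((2:ℕ):ℤ) by norm_num, zpow_natCast]; ring,
    hu2]

lemma coefY (htc : tc ≠ 0) (hu : u ≠ 0) (hu2 : u^2 = tc) (e a b : ℤ) (h : a + b = 2*e) :
    tc^e * (chebU a x * chebU b y - chebU b x * chebU a y)
      = utlf u x a * utlf u y b - utlf u x b * utlf u y a := by
  rw [cheb_comb hu, h, _root_.zpow_neg, negu_pow_even hu hu2, ← mul_assoc,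
    mul_inv_cancel₀ (zpow_ne_zero _ htc), one_mul]

lemma coefX (htc : tc ≠ 0) (hu : u ≠ 0) (hu2 : u^2 = tc) (e a b : ℤ) (h : a + b = 2*e+1) :
    tc^e * u * (chebU a x * chebU b y - chebU b x * chebU a y)
      = -(utlf u x a * utlf u y b - utlf u x b * utlf u y a) := by
  have hne : (-u) ≠ 0 := neg_ne_zero.mpr hu
  rw [cheb_comb hu, h, _root_.zpow_neg, zpow_add_one₀ hne, negu_pow_even hu hu2]
  rw [mul_inv, ← mul_assoc]
  have : tc^e * u * ((tc^e)⁻¹ * (-u)⁻¹) = -1 := by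
    field_simp
  rw [this]
  ring

end ChebPart

lemma num_eval (s t : ℕ → ℝ) (sc tc : ℝ) (htc : 0 < tc)
    (hs : ∀ i, 1 ≤ i → s i = sc) (htt : ∀ i, 1 ≤ i → t i = tc)
    (n : ℕ) (hn : 0 < n) (α β : ℝ) :
    (tc ^ (n : ℤ) * Real.sqrt tc
        * (chebU ((n : ℤ) + 1) ((α + sc) / (2 * Real.sqrt tc))
              * chebU (n : ℤ) ((β + sc) / (2 * Real.sqrt tc))
            - chebU (n : ℤ) ((α + sc) / (2 * Real.sqrt tc))
              * chebU ((n : ℤ) + 1) ((β + sc) / (2 * Real.sqrt tc)))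
      - tc ^ (n : ℤ) * (sc - s 0)
        * (chebU ((n : ℤ) + 1) ((α + sc) / (2 * Real.sqrt tc))
              * chebU ((n : ℤ) - 1) ((β + sc) / (2 * Real.sqrt tc))
            - chebU ((n : ℤ) - 1) ((α + sc) / (2 * Real.sqrt tc))
              * chebU ((n : ℤ) + 1) ((β + sc) / (2 * Real.sqrt tc)))
      + tc ^ ((n : ℤ) - 1) * Real.sqrt tc * ((sc - s 0) ^ 2 - (tc - t 0))
        * (chebU (n : ℤ) ((α + sc) / (2 * Real.sqrt tc))
              * chebU ((n : ℤ) - 1) ((β + sc) / (2 * Real.sqrt tc))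
            - chebU ((n : ℤ) - 1) ((α + sc) / (2 * Real.sqrt tc))
              * chebU (n : ℤ) ((β + sc) / (2 * Real.sqrt tc)))
      + tc ^ ((n : ℤ) - 1) * Real.sqrt tc * (tc - t 0)
        * (chebU ((n : ℤ) + 1) ((α + sc) / (2 * Real.sqrt tc))
              * chebU ((n : ℤ) - 2) ((β + sc) / (2 * Real.sqrt tc))
            - chebU ((n : ℤ) - 2) ((α + sc) / (2 * Real.sqrt tc))
              * chebU ((n : ℤ) + 1) ((β + sc) / (2 * Real.sqrt tc)))
      - tc ^ ((n : ℤ) - 1) * (sc - s 0) * (tc - t 0)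
        * (chebU (n : ℤ) ((α + sc) / (2 * Real.sqrt tc))
              * chebU ((n : ℤ) - 2) ((β + sc) / (2 * Real.sqrt tc))
            - chebU ((n : ℤ) - 2) ((α + sc) / (2 * Real.sqrt tc))
              * chebU (n : ℤ) ((β + sc) / (2 * Real.sqrt tc)))
      + tc ^ ((n : ℤ) - 2) * Real.sqrt tc * (tc - t 0) ^ 2
        * (chebU ((n : ℤ) - 1) ((α + sc) / (2 * Real.sqrt tc))
              * chebU ((n : ℤ) - 2) ((β + sc) / (2 * Real.sqrt tc))
            - chebU ((n : ℤ) - 2) ((α + sc) / (2 * Real.sqrt tc))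
              * chebU ((n : ℤ) - 1) ((β + sc) / (2 * Real.sqrt tc))))
    = (pp s t n).eval (-α) * (pp s t (n+1)).eval (-β)
        - (pp s t (n+1)).eval (-α) * (pp s t n).eval (-β) := by
  set u := Real.sqrt tc with hud
  have hu0 : 0 < u := Real.sqrt_pos.2 htc
  have hu : u ≠ 0 := hu0.ne'
  have hu2 : u^2 = tc := Real.sq_sqrt htc.le
  set x := (α + sc) / (2 * u) with hxd
  set y := (β + sc) / (2 * u) with hyd
  have hx : 2*u*x = α + sc := by rw [hxd]; field_simp
  have hy : 2*u*y = β + sc := by rw [hyd]; field_simp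
  obtain ⟨m, rfl⟩ : ∃ m, n = m + 1 := ⟨n - 1, by omega⟩
  have hK : ((m+1:ℕ):ℤ) = (m:ℤ) + 1 := by push_cast; ring
  rw [hK]
  set M := (m:ℤ) with hMd
  rw [show M+1+1 = M+2 by ring, show M+1-1 = M by ring, show M+1-2 = M-1 by ring]
  have hPn := pp_eval hs htt hu hu2 hx m
  have hQn := pp_eval hs htt hu hu2 hy m
  have hPn1 := pp_eval hs htt hu hu2 hx (m+1)
  have hQn1 := pp_eval hs htt hu hu2 hy (m+1)
  rw [hK, show M+1+1 = M+2 by ring, show M+1-1 = M by ring] at hPn1 hQn1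
  rw [hPn, hPn1, hQn, hQn1]
  have hT1 := coefX (x := x) (y := y) htc.ne' hu hu2 (M+1) (M+2) (M+1) (by ring)
  have hT2 := coefY (x := x) (y := y) htc.ne' hu hu2 (M+1) (M+2) M (by ring)
  have hT3 := coefX (x := x) (y := y) htc.ne' hu hu2 M (M+1) M (by ring)
  have hT4 := coefX (x := x) (y := y) htc.ne' hu hu2 M (M+2) (M-1) (by ring)
  have hT5 := coefY (x := x) (y := y) htc.ne' hu hu2 M (M+1) (M-1) (by ring)
  have hT6 := coefX (x := x) (y := y) htc.ne' hu hu2 (M-1) M (M-1) (by ring)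
  linear_combination hT1 - (sc - s 0) * hT2 + ((sc - s 0)^2 - (tc - t 0)) * hT3
    + (tc - t 0) * hT4 - (sc - s 0) * (tc - t 0) * hT5 + (tc - t 0)^2 * hT6

end HankelAux

/-- Eq. (4.3): if `s_i = s` and `t_i = t` for `i ≥ 1` with `t > 0`, then for `n ≥ 1`
and real `α, β`, with `x = (α+s)/(2√t)` and `y = (β+s)/(2√t)`,
`det(αβ m_{i+j} + (α+β) m_{i+j+1} + m_{i+j+2})·(α-β) = Num(α,β)·det(m_{i+j})`. -/
theorem hankel_three_term_moments_chebyshev (s t : ℕ → ℝ) (ht : ∀ n, t n ≠ 0)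
    (sc tc : ℝ) (htc : 0 < tc)
    (hs : ∀ i, 1 ≤ i → s i = sc) (htt : ∀ i, 1 ≤ i → t i = tc)
    (n : ℕ) (hn : 0 < n) (α β : ℝ) :
    Matrix.det (Matrix.of fun i j : Fin n =>
        α * β * motzkinGF s t ((i : ℕ) + (j : ℕ)) 0
          + (α + β) * motzkinGF s t ((i : ℕ) + (j : ℕ) + 1) 0
          + motzkinGF s t ((i : ℕ) + (j : ℕ) + 2) 0) * (α - β)
      = (let x := (α + sc) / (2 * Real.sqrt tc)
         let y := (β + sc) / (2 * Real.sqrt tc)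
         tc ^ (n : ℤ) * Real.sqrt tc
            * (chebU ((n : ℤ) + 1) x * chebU (n : ℤ) y
                - chebU (n : ℤ) x * chebU ((n : ℤ) + 1) y)
          - tc ^ (n : ℤ) * (sc - s 0)
            * (chebU ((n : ℤ) + 1) x * chebU ((n : ℤ) - 1) y
                - chebU ((n : ℤ) - 1) x * chebU ((n : ℤ) + 1) y)
          + tc ^ ((n : ℤ) - 1) * Real.sqrt tc * ((sc - s 0) ^ 2 - (tc - t 0))
            * (chebU (n : ℤ) x * chebU ((n : ℤ) - 1) y
                - chebU ((n : ℤ) - 1) x * chebU (n : ℤ) y)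
          + tc ^ ((n : ℤ) - 1) * Real.sqrt tc * (tc - t 0)
            * (chebU ((n : ℤ) + 1) x * chebU ((n : ℤ) - 2) y
                - chebU ((n : ℤ) - 2) x * chebU ((n : ℤ) + 1) y)
          - tc ^ ((n : ℤ) - 1) * (sc - s 0) * (tc - t 0)
            * (chebU (n : ℤ) x * chebU ((n : ℤ) - 2) y
                - chebU ((n : ℤ) - 2) x * chebU (n : ℤ) y)
          + tc ^ ((n : ℤ) - 2) * Real.sqrt tc * (tc - t 0) ^ 2
            * (chebU ((n : ℤ) - 1) x * chebU ((n : ℤ) - 2) y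
                - chebU ((n : ℤ) - 2) x * chebU ((n : ℤ) - 1) y))
        * Matrix.det (Matrix.of fun i j : Fin n =>
            motzkinGF s t ((i : ℕ) + (j : ℕ)) 0) := by
  have hnum : (let x := (α + sc) / (2 * Real.sqrt tc)
         let y := (β + sc) / (2 * Real.sqrt tc)
         tc ^ (n : ℤ) * Real.sqrt tc
            * (chebU ((n : ℤ) + 1) x * chebU (n : ℤ) y
                - chebU (n : ℤ) x * chebU ((n : ℤ) + 1) y)
          - tc ^ (n : ℤ) * (sc - s 0)
            * (chebU ((n : ℤ) + 1) x * chebU ((n : ℤ) - 1) y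
                - chebU ((n : ℤ) - 1) x * chebU ((n : ℤ) + 1) y)
          + tc ^ ((n : ℤ) - 1) * Real.sqrt tc * ((sc - s 0) ^ 2 - (tc - t 0))
            * (chebU (n : ℤ) x * chebU ((n : ℤ) - 1) y
                - chebU ((n : ℤ) - 1) x * chebU (n : ℤ) y)
          + tc ^ ((n : ℤ) - 1) * Real.sqrt tc * (tc - t 0)
            * (chebU ((n : ℤ) + 1) x * chebU ((n : ℤ) - 2) y
                - chebU ((n : ℤ) - 2) x * chebU ((n : ℤ) + 1) y)
          - tc ^ ((n : ℤ) - 1) * (sc - s 0) * (tc - t 0)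
            * (chebU (n : ℤ) x * chebU ((n : ℤ) - 2) y
                - chebU ((n : ℤ) - 2) x * chebU (n : ℤ) y)
          + tc ^ ((n : ℤ) - 2) * Real.sqrt tc * (tc - t 0) ^ 2
            * (chebU ((n : ℤ) - 1) x * chebU ((n : ℤ) - 2) y
                - chebU ((n : ℤ) - 2) x * chebU ((n : ℤ) - 1) y)) = _ :=
    HankelAux.num_eval s t sc tc htc hs htt n hn α β
  rw [HankelAux.det_B_eq s t n α β, hnum]
  have hkey := HankelAux.key s t n α β
  linear_combination
    (Matrix.det (Matrix.of fun i j : Fin n => motzkinGF s t ((i : ℕ) + (j : ℕ)) 0)) * hkey
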